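/- Let X^n be the stationary geometric-sticky Markov chain with parameter α and base distribution p. For any x ∈ X and any m with 2 ≤ m ≤ n−1, the probability that X_m = x and x appears nowhere else in X^n equals (1−α)²·p_x·(1−p_x)²·(1−(1−α)p_x)^{n−3}. -/

import Mathlib

open scoped Classical

/-- The probability that the stationary geometric-sticky Markov chain with stickiness
parameter `α` and base distribution `p` (i.e. `X_1 ~ p` and
`Pr(X_i = z | X_{i-1} = y) = α·1[z=y] + (1-α)·p z`) produces the sample path `x`. -/
noncomputable def stickyProb {X : Type*} [DecidableEq X] (α : ℝ) (p : X → ℝ) {n : ℕ}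
    (x : Fin n → X) : ℝ :=
  (if h : 0 < n then p (x ⟨0, h⟩) else 1) *
  ∏ i : Fin n, if i.val = 0 then 1 else
    ((if x i = x ⟨i.val - 1, lt_of_le_of_lt (Nat.pred_le _) i.isLt⟩ then α else 0)
      + (1 - α) * p (x i))

/-!
The chain is Markov with kernel `K y z = α·1[z = y] + (1-α)·p z`. Summing out the last
coordinate shows that the mass of the paths with `x_i ∈ s_i` for all `i` is
`∑_{z ∈ s_0} p z` times the product of the row sums `∑_{z ∈ s_{j+1}} K y z`, as soon as each
of these row sums takes the same value for all `y ∈ s_j`. For the pattern "`a` at time `k`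
and nowhere else" this is the case: since `K` is stochastic, a row sum is `1 - (1-α) p_a`
between two times off `a`, `(1-α) p_a` into `a` and `(1-α)(1-p_a)` out of `a`, while the
initial mass off `a` is `1 - p_a`.
-/

open Finset

section Tuples

variable {X : Type*}

lemma sum_pi_fin_succ [Fintype X] {M : Type*} [AddCommMonoid M] {N : ℕ}
    (F : (Fin (N + 1) → X) → M) :
    ∑ x, F x = ∑ f : Fin N → X, ∑ z, F (Fin.snoc f z) := by
  rw [← (Fin.snocEquiv fun _ => X).sum_comp, Fintype.sum_prod_type_right]
  rfl

lemma snoc_mem_iff (s : ℕ → Finset X) {N : ℕ} (f : Fin (N + 1) → X) (z : X) :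
    (∀ i : Fin (N + 2), (Fin.snoc f z : Fin (N + 2) → X) i ∈ s i)
      ↔ (∀ i : Fin (N + 1), f i ∈ s i) ∧ z ∈ s (N + 1) := by
  rw [Fin.forall_fin_succ']
  simp only [Fin.snoc_castSucc, Fin.snoc_last, Fin.val_castSucc, Fin.val_last]

end Tuples

lemma prod_range_ite_ite {M : Type*} [CommMonoid M] {k N : ℕ} (hk : 1 ≤ k) (hkN : k < N)
    (A B q : M) :
    ∏ j ∈ range N, (if j + 1 = k then A else if j = k then B else q) = A * B * q ^ (N - 2) := by
  obtain ⟨k, rfl⟩ : ∃ k', k = k' + 1 := ⟨k - 1, by omega⟩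
  obtain ⟨r, rfl⟩ : ∃ r, N = k + 2 + r := ⟨N - k - 2, by omega⟩
  have hhead : ∏ j ∈ range k, (if j + 1 = k + 1 then A else if j = k + 1 then B else q)
      = q ^ k := by
    rw [prod_eq_pow_card (b := q) fun j hj => ?_, card_range]
    rw [mem_range] at hj
    rw [if_neg (by omega), if_neg (by omega)]
  have htail : ∏ j ∈ range r,
      (if k + 2 + j + 1 = k + 1 then A else if k + 2 + j = k + 1 then B else q) = q ^ r := by
    rw [prod_eq_pow_card (b := q) fun j _ => ?_, card_range]
    rw [if_neg (by omega), if_neg (by omega)]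
  rw [prod_range_add, prod_range_add, hhead, htail, show k + 2 + r - 2 = k + r by omega, pow_add]
  simp [prod_range_succ, mul_assoc, mul_left_comm]

namespace StickyChain

variable {X : Type*} [DecidableEq X] (α : ℝ) (p : X → ℝ)

noncomputable def kernel (y z : X) : ℝ :=
  (if z = y then α else 0) + (1 - α) * p z

lemma kernel_of_ne {y a : X} (h : y ≠ a) : kernel α p y a = (1 - α) * p a := by
  simp [kernel, Ne.symm h]

lemma sum_kernel [Fintype X] {p : X → ℝ} (hsum : ∑ z, p z = 1) (y : X) :
    ∑ z, kernel α p y z = 1 := by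
  simp only [kernel, sum_add_distrib, sum_ite_eq', mem_univ, if_true, ← mul_sum, hsum]
  ring

lemma sum_erase_kernel [Fintype X] {p : X → ℝ} (hsum : ∑ z, p z = 1) (y a : X) :
    ∑ z ∈ univ.erase a, kernel α p y z = 1 - kernel α p y a := by
  rw [sum_erase_eq_sub (mem_univ a), sum_kernel α hsum]

lemma stickyProb_eq_prod {N : ℕ} (x : Fin (N + 1) → X) :
    stickyProb α p x = p (x 0) * ∏ i : Fin N, kernel α p (x i.castSucc) (x i.succ) := by
  rw [stickyProb, dif_pos N.succ_pos, Fin.prod_univ_succ, if_pos (Fin.val_zero (N + 1)), one_mul]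
  exact congrArg₂ _ rfl (prod_congr rfl fun i _ => if_neg (Nat.succ_ne_zero i))

lemma stickyProb_one (x : Fin 1 → X) : stickyProb α p x = p (x 0) := by
  simp [stickyProb_eq_prod]

lemma stickyProb_snoc {N : ℕ} (f : Fin (N + 1) → X) (z : X) :
    stickyProb α p (Fin.snoc f z : Fin (N + 2) → X)
      = stickyProb α p f * kernel α p (f (Fin.last N)) z := by
  rw [stickyProb_eq_prod, stickyProb_eq_prod, Fin.prod_univ_castSucc, ← Fin.castSucc_zero,
    Fin.succ_last]
  simp only [Fin.succ_castSucc, Fin.snoc_castSucc, Fin.snoc_last, mul_assoc]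

variable [Fintype X]

noncomputable def constrainedPathMass (s : ℕ → Finset X) (n : ℕ) : ℝ :=
  ∑ x : Fin n → X, if ∀ i : Fin n, x i ∈ s i then stickyProb α p x else 0

lemma constrainedPathMass_one (s : ℕ → Finset X) :
    constrainedPathMass α p s 1 = ∑ z ∈ s 0, p z := by
  rw [constrainedPathMass, ← (Equiv.funUnique (Fin 1) X).symm.sum_comp, ← sum_filter]
  simp [stickyProb_one]

lemma constrainedPathMass_succ {s : ℕ → Finset X} {N : ℕ} {c : ℝ}
    (hc : ∀ y ∈ s N, ∑ z ∈ s (N + 1), kernel α p y z = c) :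
    constrainedPathMass α p s (N + 2) = constrainedPathMass α p s (N + 1) * c := by
  rw [constrainedPathMass, sum_pi_fin_succ, constrainedPathMass, sum_mul]
  refine sum_congr rfl fun f _ => ?_
  by_cases hf : ∀ i : Fin (N + 1), f i ∈ s i
  · simp_rw [if_pos hf, snoc_mem_iff, and_iff_right hf, stickyProb_snoc]
    rw [sum_ite_mem, univ_inter, ← mul_sum, hc _ (hf (Fin.last N))]
  · simp [snoc_mem_iff, hf]

lemma constrainedPathMass_eq_prod {s : ℕ → Finset X} {N : ℕ} {c : ℕ → ℝ}
    (hc : ∀ j < N, ∀ y ∈ s j, ∑ z ∈ s (j + 1), kernel α p y z = c j) :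
    constrainedPathMass α p s (N + 1) = (∑ z ∈ s 0, p z) * ∏ j ∈ range N, c j := by
  induction N with
  | zero => simp [constrainedPathMass_one]
  | succ N ih =>
    rw [constrainedPathMass_succ α p (hc N N.lt_succ_self), ih fun j hj => hc j (by omega),
      prod_range_succ, mul_assoc]

def exactlyAt (a : X) (k i : ℕ) : Finset X :=
  if i = k then {a} else univ.erase a

lemma mem_exactlyAt {a z : X} {k i : ℕ} : z ∈ exactlyAt a k i ↔ (z = a ↔ i = k) := by
  unfold exactlyAt
  split_ifs with h <;> simp [h]

lemma forall_mem_exactlyAt_iff {n k : ℕ} (hk : k < n) (x : Fin n → X) (a : X) :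
    (∀ i : Fin n, x i ∈ exactlyAt a k i) ↔ x ⟨k, hk⟩ = a ∧ ∀ i : Fin n, (i : ℕ) ≠ k → x i ≠ a := by
  simp only [mem_exactlyAt]
  refine ⟨fun h => ⟨(h ⟨k, hk⟩).2 rfl, fun i hi hxi => hi ((h i).1 hxi)⟩, ?_⟩
  rintro ⟨hka, hne⟩ i
  refine ⟨fun hxi => by_contra fun hi => hne i hi hxi, fun hi => ?_⟩
  obtain rfl : i = ⟨k, hk⟩ := Fin.ext hi
  exact hka

lemma sum_exactlyAt_kernel {p : X → ℝ} (hsum : ∑ z, p z = 1) (a : X) (k j : ℕ)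
    {y : X} (hy : y ∈ exactlyAt a k j) :
    ∑ z ∈ exactlyAt a k (j + 1), kernel α p y z
      = if j + 1 = k then (1 - α) * p a
        else if j = k then (1 - α) * (1 - p a) else 1 - (1 - α) * p a := by
  rw [mem_exactlyAt] at hy
  unfold exactlyAt
  split_ifs with h1 h2
  · rw [sum_singleton, kernel_of_ne α p fun h => absurd (hy.1 h) (by omega)]
  · rw [sum_erase_kernel α hsum, hy.2 h2, kernel, if_pos rfl]
    ring
  · rw [sum_erase_kernel α hsum, kernel_of_ne α p fun h => h2 (hy.1 h)]

end StickyChain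

open StickyChain

theorem sticky_prob_singleton_interior
    {X : Type*} [Fintype X] [DecidableEq X] (α : ℝ)
    (p : X → ℝ) (hsum : ∑ z, p z = 1)
    (n : ℕ) (m : ℕ) (hm1 : 2 ≤ m) (hm2 : m ≤ n - 1) (a : X) :
    ∑ x : Fin n → X,
        (if x ⟨m - 1, by omega⟩ = a ∧ (∀ i : Fin n, i.val ≠ m - 1 → x i ≠ a)
          then stickyProb α p x else 0)
      = (1 - α) ^ 2 * p a * (1 - p a) ^ 2 * (1 - (1 - α) * p a) ^ (n - 3) := by
  obtain ⟨N, rfl⟩ : ∃ N, n = N + 1 := ⟨n - 1, by omega⟩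
  have hstart : ∑ z ∈ exactlyAt a (m - 1) 0, p z = 1 - p a := by
    rw [exactlyAt, if_neg (by omega), sum_erase_eq_sub (mem_univ a), hsum]
  calc _ = constrainedPathMass α p (exactlyAt a (m - 1)) (N + 1) :=
        sum_congr rfl fun x _ => if_congr (forall_mem_exactlyAt_iff _ x a).symm rfl rfl
    _ = (1 - p a) * ((1 - α) * p a * ((1 - α) * (1 - p a)) * (1 - (1 - α) * p a) ^ (N - 2)) := by
        rw [constrainedPathMass_eq_prod α p fun j _ y hy => sum_exactlyAt_kernel α hsum a _ j hy,
          hstart, prod_range_ite_ite (by omega) (by omega)]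
    _ = _ := by rw [show N + 1 - 3 = N - 2 by omega]; ring
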